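/- Let X₁ = Σ_{j=0}^{n-2}(|j⟩⟨j+1| + |j+1⟩⟨j|) on ℂⁿ and for t ∈ [0, 1/2] let Λ_t(X) = A_t ∘ X be the Schur (entrywise) product with A_t = I + t X₁ (entries 1 on diagonal, t on first off-diagonals). Then ‖Λ_t(X₁)‖₁ = 2t Σ_{k=1}^n |cos(kπ/(n+1))|, which is strictly increasing in t; hence the family {Λ_t} is not P-divisible. -/

import Mathlib

/-!
`X₁` is the adjacency matrix of the path on `n` vertices: the sine vectors
`(sin (j θₖ))ⱼ`, `θₖ = kπ/(n+1)`, are eigenvectors with the distinct eigenvalues `2 cos θₖ`, so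
after normalisation they form a unitary `U` with `X₁ = U diag(2 cos θₖ) U*`. As `A_t ∘ X₁ = t X₁`,
`‖Λ_t(X₁)‖₁ = 2t ∑ |cos θₖ|`, which is strictly increasing because `cos (π/(n+1)) > 0` for `n ≥ 2`.
On the other hand a positive trace-preserving `Φ` cannot increase the trace norm of a Hermitian
`X`: write `X = P - N` with `P, N ≥ 0` and `tr P + tr N = ‖X‖₁`; in the eigenbasis of `Φ X` each
diagonal entry of `Φ X = Φ P - Φ N` is a difference of nonnegative reals, so
`‖Φ X‖₁ ≤ tr Φ P + tr Φ N = ‖X‖₁`. Hence `Λ_{1/2}` does not factor through `Λ_{1/4}`.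
-/

open Matrix
open scoped ComplexOrder

/-- Trace norm `‖A‖₁ = Tr √(Aᴴ A)` (finite-dimensional stand-in for the
trace norm on trace-class operators `B₁(H)`). -/
noncomputable def traceNorm {ι : Type*} [Fintype ι] [DecidableEq ι]
    (A : Matrix ι ι ℂ) : ℝ :=
  (((Matrix.posSemidef_conjTranspose_mul_self A).1.eigenvectorUnitary : Matrix ι ι ℂ) *
      diagonal (fun i => ((Real.sqrt
        ((Matrix.posSemidef_conjTranspose_mul_self A).1.eigenvalues i) : ℝ) : ℂ)) *
      (star (Matrix.posSemidef_conjTranspose_mul_self A).1.eigenvectorUnitary :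
        Matrix ι ι ℂ)).trace.re

/-- The tridiagonal Schur multiplier `A_t = I + t·X₁`. -/
noncomputable def schurA (n : ℕ) (t : ℝ) : Matrix (Fin n) (Fin n) ℂ :=
  Matrix.of fun i j =>
    if i = j then 1
    else if (i : ℕ) + 1 = (j : ℕ) ∨ (j : ℕ) + 1 = (i : ℕ) then (t : ℂ) else 0

/-- The off-diagonal part `X₁`. -/
def schurX₁ (n : ℕ) : Matrix (Fin n) (Fin n) ℂ :=
  Matrix.of fun i j =>
    if (i : ℕ) + 1 = (j : ℕ) ∨ (j : ℕ) + 1 = (i : ℕ) then 1 else 0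

open Unitary

namespace Matrix

variable {ι : Type*} [Fintype ι] [DecidableEq ι]

open scoped MatrixOrder in
lemma traceNorm_eq_of_mul_self_eq {A B : Matrix ι ι ℂ} (hB : B.PosSemidef)
    (h : B * B = Aᴴ * A) : traceNorm A = B.trace.re := by
  have hP := posSemidef_conjTranspose_mul_self A
  have hsqrt : CFC.sqrt (Aᴴ * A) = B := CFC.sqrt_unique h hB.nonneg
  rw [← hsqrt, CFC.sqrt_eq_real_sqrt _ hP.nonneg, cfcₙ_eq_cfc (by fun_prop) Real.sqrt_zero,
    hP.1.cfc_eq]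
  rfl

lemma trace_unitary_conj (U : unitaryGroup ι ℂ) (A : Matrix ι ι ℂ) :
    (conjStarAlgAut ℂ _ U A).trace = A.trace := by
  rw [conjStarAlgAut_apply, trace_mul_cycle, Unitary.coe_star_mul_self, one_mul]

lemma PosSemidef.unitary_conj {A : Matrix ι ι ℂ} (hA : A.PosSemidef) (U : unitaryGroup ι ℂ) :
    (conjStarAlgAut ℂ _ U A).PosSemidef := by
  rw [conjStarAlgAut_apply, star_eq_conjTranspose]
  exact hA.mul_mul_conjTranspose_same _

lemma posSemidef_unitary_conj_diagonal (U : unitaryGroup ι ℂ) {d : ι → ℝ} (hd : 0 ≤ d) :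
    (conjStarAlgAut ℂ _ U (diagonal (RCLike.ofReal ∘ d))).PosSemidef :=
  (PosSemidef.diagonal fun i => by simpa using hd i).unitary_conj U

lemma traceNorm_unitary_conj_diagonal (U : unitaryGroup ι ℂ) (d : ι → ℝ) :
    traceNorm (conjStarAlgAut ℂ _ U (diagonal (RCLike.ofReal ∘ d))) = ∑ i, |d i| := by
  rw [traceNorm_eq_of_mul_self_eq (B := conjStarAlgAut ℂ _ U (diagonal (RCLike.ofReal ∘ (|d ·|))))
    (posSemidef_unitary_conj_diagonal U fun i => abs_nonneg (d i))]
  · rw [trace_unitary_conj, trace_diagonal]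
    simp
  · rw [← star_eq_conjTranspose, ← map_star, ← map_mul, ← map_mul, star_eq_conjTranspose,
      diagonal_conjTranspose, diagonal_mul_diagonal, diagonal_mul_diagonal]
    congr 2
    ext i
    simp [← Complex.ofReal_mul, abs_mul_abs_self]

lemma IsHermitian.traceNorm_eq {A : Matrix ι ι ℂ} (hA : A.IsHermitian) :
    traceNorm A = ∑ i, |hA.eigenvalues i| := by
  conv_lhs => rw [hA.spectral_theorem]
  exact traceNorm_unitary_conj_diagonal _ _

lemma traceNorm_sub_le {P N : Matrix ι ι ℂ} (hP : P.PosSemidef) (hN : N.PosSemidef) :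
    traceNorm (P - N) ≤ (P.trace + N.trace).re := by
  have hA : (P - N).IsHermitian := hP.1.sub hN.1
  set V := star hA.eigenvectorUnitary
  have hdiag (i : ι) : hA.eigenvalues i =
      (conjStarAlgAut ℂ _ V P i i).re - (conjStarAlgAut ℂ _ V N i i).re := by
    have := congrFun (congrFun hA.conjStarAlgAut_star_eigenvectorUnitary i) i
    rw [map_sub, diagonal_apply_eq] at this
    rw [← Complex.sub_re]
    exact (congrArg Complex.re this).symm
  have hle (i : ι) : |hA.eigenvalues i| ≤
      (conjStarAlgAut ℂ _ V P i i).re + (conjStarAlgAut ℂ _ V N i i).re := by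
    have hp := Complex.nonneg_iff.mp ((hP.unitary_conj V).diag_nonneg (i := i))
    have hq := Complex.nonneg_iff.mp ((hN.unitary_conj V).diag_nonneg (i := i))
    rw [hdiag, abs_le]
    constructor <;> linarith [hp.1, hq.1]
  calc traceNorm (P - N) = ∑ i, |hA.eigenvalues i| := hA.traceNorm_eq
    _ ≤ ∑ i, ((conjStarAlgAut ℂ _ V P i i).re + (conjStarAlgAut ℂ _ V N i i).re) :=
      Finset.sum_le_sum fun i _ => hle i
    _ = (P.trace + N.trace).re := by
      rw [← trace_unitary_conj V P, ← trace_unitary_conj V N]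
      simp [trace, Finset.sum_add_distrib]

lemma IsHermitian.exists_posSemidef_sub_eq {A : Matrix ι ι ℂ} (hA : A.IsHermitian) :
    ∃ P N : Matrix ι ι ℂ, P.PosSemidef ∧ N.PosSemidef ∧ A = P - N ∧
      (P.trace + N.trace).re = traceNorm A := by
  set U := hA.eigenvectorUnitary
  refine ⟨conjStarAlgAut ℂ _ U (diagonal (RCLike.ofReal ∘ fun i => (hA.eigenvalues i)⁺)),
    conjStarAlgAut ℂ _ U (diagonal (RCLike.ofReal ∘ fun i => (hA.eigenvalues i)⁻)),
    posSemidef_unitary_conj_diagonal U fun i => posPart_nonneg _,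
    posSemidef_unitary_conj_diagonal U fun i => negPart_nonneg _, ?_, ?_⟩
  · conv_lhs => rw [hA.spectral_theorem]
    rw [← map_sub, diagonal_sub]
    congr 2
    ext i
    simp [← Complex.ofReal_sub]
  · rw [trace_unitary_conj, trace_unitary_conj, hA.traceNorm_eq, ← trace_add, diagonal_add,
      trace_diagonal]
    simp [← negPart_add_posPart, add_comm]

lemma traceNorm_map_le (Φ : Matrix ι ι ℂ →ₗ[ℂ] Matrix ι ι ℂ)
    (hΦ : ∀ A : Matrix ι ι ℂ, A.PosSemidef → (Φ A).PosSemidef)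
    (htr : ∀ A : Matrix ι ι ℂ, (Φ A).trace = A.trace) {X : Matrix ι ι ℂ} (hX : X.IsHermitian) :
    traceNorm (Φ X) ≤ traceNorm X := by
  obtain ⟨P, N, hP, hN, rfl, htn⟩ := hX.exists_posSemidef_sub_eq
  calc traceNorm (Φ (P - N)) = traceNorm (Φ P - Φ N) := by rw [map_sub]
    _ ≤ ((Φ P).trace + (Φ N).trace).re := traceNorm_sub_le (hΦ P hP) (hΦ N hN)
    _ = traceNorm (P - N) := by rw [htr, htr, htn]

lemma IsHermitian.conjTranspose_mul_self_eq_diagonal {M S : Matrix ι ι ℂ} (hM : M.IsHermitian)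
    {d : ι → ℝ} (hd : Function.Injective d) (hMS : M * S = S * diagonal (RCLike.ofReal ∘ d)) :
    Sᴴ * S = diagonal fun a => ((∑ i, Complex.normSq (S i a) : ℝ) : ℂ) := by
  have hD : (diagonal (RCLike.ofReal ∘ d) : Matrix ι ι ℂ)ᴴ = diagonal (RCLike.ofReal ∘ d) := by
    simp [diagonal_conjTranspose]
  have hcomm : Sᴴ * S * diagonal (RCLike.ofReal ∘ d) = diagonal (RCLike.ofReal ∘ d) * (Sᴴ * S) :=
    calc Sᴴ * S * diagonal (RCLike.ofReal ∘ d) = Sᴴ * (M * S) := by rw [mul_assoc, hMS]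
      _ = (M * S)ᴴ * S := by rw [conjTranspose_mul, hM.eq, mul_assoc]
      _ = diagonal (RCLike.ofReal ∘ d) * (Sᴴ * S) := by rw [hMS, conjTranspose_mul, hD, mul_assoc]
  ext a b
  by_cases hab : a = b
  · subst hab
    simp [mul_apply, Complex.normSq_eq_conj_mul_self]
  · have := congrFun₂ hcomm a b
    rw [mul_diagonal, diagonal_mul] at this
    have hne : (d b : ℂ) ≠ d a := by exact_mod_cast hd.ne (Ne.symm hab)
    have hzero : (Sᴴ * S) a b * (d b - d a : ℂ) = 0 := by
      simp only [Function.comp_apply, RCLike.ofReal_eq_complex_ofReal] at this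
      linear_combination this
    rw [diagonal_apply_ne _ hab]
    exact (mul_eq_zero.mp hzero).resolve_right (sub_ne_zero.mpr hne)

lemma IsHermitian.exists_unitary_eq_of_mul_eq_diagonal {M S : Matrix ι ι ℂ} (hM : M.IsHermitian)
    {d : ι → ℝ} (hd : Function.Injective d) (hS : ∀ a, ∃ i, S i a ≠ 0)
    (hMS : M * S = S * diagonal (RCLike.ofReal ∘ d)) :
    ∃ U : unitaryGroup ι ℂ, M = conjStarAlgAut ℂ _ U (diagonal (RCLike.ofReal ∘ d)) := by
  set g : ι → ℝ := fun a => ∑ i, Complex.normSq (S i a)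
  have hg (a : ι) : 0 < g a := by
    obtain ⟨i, hi⟩ := hS a
    exact lt_of_lt_of_le (Complex.normSq_pos.mpr hi)
      (Finset.single_le_sum (fun j _ => Complex.normSq_nonneg (S j a)) (Finset.mem_univ i))
  set c : ι → ℝ := fun a => (√(g a))⁻¹
  set U := S * diagonal (RCLike.ofReal ∘ c)
  have hU : star U * U = 1 := by
    rw [star_eq_conjTranspose, conjTranspose_mul, diagonal_conjTranspose, mul_assoc,
      ← mul_assoc Sᴴ, hM.conjTranspose_mul_self_eq_diagonal hd hMS]
    ext a b
    by_cases hab : a = b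
    · subst hab
      have hc : c a * (g a * c a) = 1 := by
        have hs := Real.sqrt_pos.mpr (hg a)
        have hsq := Real.mul_self_sqrt (hg a).le
        simp only [c]
        field_simp
        linarith
      simp only [diagonal_mul, mul_diagonal, diagonal_apply_eq, Pi.star_apply, Function.comp_apply,
        RCLike.star_def, RCLike.conj_ofReal, one_apply_eq]
      change ((c a : ℝ) : ℂ) * (((g a : ℝ) : ℂ) * ((c a : ℝ) : ℂ)) = 1
      exact_mod_cast hc
    · simp [hab]
  refine ⟨⟨U, mem_unitaryGroup_iff'.mpr hU⟩, ?_⟩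
  have hMU : M * U = U * diagonal (RCLike.ofReal ∘ d) := by
    rw [← mul_assoc, hMS, mul_assoc, mul_assoc, diagonal_mul_diagonal, diagonal_mul_diagonal]
    simp only [mul_comm]
  calc M = M * (U * star U) := by rw [mul_eq_one_comm.mp hU, mul_one]
    _ = U * diagonal (RCLike.ofReal ∘ d) * star U := by rw [← mul_assoc, hMU]

end Matrix

section PathGraph

variable {n : ℕ}

lemma sum_schurX₁_mul (f : ℕ → ℂ) (h0 : f 0 = 0) (hn : f (n + 1) = 0) (j : Fin n) :
    ∑ l : Fin n, schurX₁ n j l * f (l + 1) = f j + f (j + 2) := by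
  have hsplit (l : ℕ) : (if (j : ℕ) + 1 = l ∨ l + 1 = j then (1 : ℂ) else 0) * f (l + 1) =
      (if l + 1 = j then f (l + 1) else 0) + (if (j : ℕ) + 1 = l then f (l + 1) else 0) := by
    split_ifs <;> first | omega | simp
  simp only [schurX₁, of_apply]
  rw [Fin.sum_univ_eq_sum_range (fun l => (if (j : ℕ) + 1 = l ∨ l + 1 = j then (1 : ℂ) else 0) *
    f (l + 1)) n, Finset.sum_congr rfl fun l _ => hsplit l, Finset.sum_add_distrib,
    Finset.sum_ite_eq]
  congr 1
  · rcases j with ⟨_ | m, hm⟩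
    · simp [h0]
    · simp only [add_left_inj]
      rw [Finset.sum_ite_eq', if_pos (Finset.mem_range.mpr (by omega))]
  · rcases Nat.lt_or_ge ((j : ℕ) + 1) n with h | h
    · simp [h]
    · rw [if_neg (by simp; omega), show (j : ℕ) + 2 = n + 1 by omega, hn]

noncomputable def pathAngle (n : ℕ) (k : Fin n) : ℝ := ((k : ℕ) + 1) * Real.pi / (n + 1)

noncomputable def sineMatrix (n : ℕ) : Matrix (Fin n) (Fin n) ℂ :=
  of fun j k => (Real.sin (((j : ℕ) + 1) * pathAngle n k) : ℂ)

lemma pathAngle_mem_Ioo (k : Fin n) : pathAngle n k ∈ Set.Ioo 0 Real.pi := by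
  have hk : ((k : ℕ) : ℝ) + 1 < n + 1 := by exact_mod_cast Nat.succ_lt_succ k.2
  constructor
  · unfold pathAngle; positivity
  · rw [pathAngle, div_lt_iff₀ (by positivity), mul_comm]
    exact mul_lt_mul_of_pos_left hk Real.pi_pos

lemma injective_cos_pathAngle : Function.Injective fun k => 2 * Real.cos (pathAngle n k) := by
  intro a b hab
  have hcos := Real.injOn_cos (Set.Ioo_subset_Icc_self (pathAngle_mem_Ioo a))
    (Set.Ioo_subset_Icc_self (pathAngle_mem_Ioo b)) (by simpa using hab)
  have : ((a : ℕ) : ℝ) = b := by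
    unfold pathAngle at hcos
    field_simp at hcos
    linarith [Real.pi_pos]
  exact Fin.ext (by exact_mod_cast this)

lemma sin_succ_mul_pathAngle (k : Fin n) : Real.sin (((n + 1 : ℕ) : ℝ) * pathAngle n k) = 0 := by
  have h : ((n + 1 : ℕ) : ℝ) * pathAngle n k = ((k + 1 : ℕ) : ℝ) * Real.pi := by
    rw [pathAngle]
    push_cast
    field_simp
  rw [h, Real.sin_nat_mul_pi]

lemma schurX₁_mul_sineMatrix : schurX₁ n * sineMatrix n =
    sineMatrix n * diagonal (RCLike.ofReal ∘ fun k => 2 * Real.cos (pathAngle n k)) := by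
  ext j k
  set θ := pathAngle n k
  have h := sum_schurX₁_mul (fun m => (Real.sin (m * θ) : ℂ)) (by simp)
    (by rw [sin_succ_mul_pathAngle, Complex.ofReal_zero]) j
  have htrig : Real.sin ((j : ℕ) * θ) + Real.sin (((j : ℕ) + 2) * θ) =
      Real.sin (((j : ℕ) + 1) * θ) * (2 * Real.cos θ) := by
    rw [show ((j : ℕ) : ℝ) * θ = ((j : ℕ) + 1) * θ - θ by ring,
      show (((j : ℕ) : ℝ) + 2) * θ = ((j : ℕ) + 1) * θ + θ by ring, Real.sin_sub, Real.sin_add]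
    ring
  simp only [Nat.cast_add, Nat.cast_one, Nat.cast_ofNat] at h
  rw [mul_apply, mul_diagonal]
  simp only [sineMatrix, of_apply, Function.comp_apply, RCLike.ofReal_eq_complex_ofReal]
  rw [h]
  exact_mod_cast htrig

lemma isHermitian_schurX₁ : (schurX₁ n).IsHermitian := by
  ext i j
  simp only [schurX₁, conjTranspose_apply, of_apply, apply_ite (star : ℂ → ℂ), star_one,
    star_zero, or_comm]

lemma sineMatrix_zero_ne_zero (k : Fin n) : sineMatrix n ⟨0, k.pos⟩ k ≠ 0 := by
  have h := Real.sin_pos_of_pos_of_lt_pi (pathAngle_mem_Ioo k).1 (pathAngle_mem_Ioo k).2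
  simpa [sineMatrix, ← Complex.ofReal_sin] using h.ne'

lemma exists_unitary_schurX₁_eq : ∃ U : unitaryGroup (Fin n) ℂ, schurX₁ n =
    conjStarAlgAut ℂ _ U (diagonal (RCLike.ofReal ∘ fun k => 2 * Real.cos (pathAngle n k))) :=
  isHermitian_schurX₁.exists_unitary_eq_of_mul_eq_diagonal injective_cos_pathAngle
    (fun k => ⟨⟨0, k.pos⟩, sineMatrix_zero_ne_zero k⟩) schurX₁_mul_sineMatrix

lemma hadamard_schurA_schurX₁ (t : ℝ) : schurA n t ⊙ schurX₁ n = (t : ℂ) • schurX₁ n := by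
  ext i j
  simp only [hadamard_apply, Matrix.smul_apply, schurA, schurX₁, of_apply, smul_eq_mul]
  by_cases hij : i = j
  · subst hij
    simp
  · simp only [hij, if_false]
    split_ifs <;> simp

lemma traceNorm_smul_schurX₁ {t : ℝ} (ht : 0 ≤ t) :
    traceNorm ((t : ℂ) • schurX₁ n) = 2 * t * ∑ k, |Real.cos (pathAngle n k)| := by
  obtain ⟨U, hU⟩ := exists_unitary_schurX₁_eq (n := n)
  have hdiag : (t : ℂ) • diagonal (RCLike.ofReal ∘ fun k => 2 * Real.cos (pathAngle n k)) =
      (diagonal (RCLike.ofReal ∘ fun k => t * (2 * Real.cos (pathAngle n k))) :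
        Matrix (Fin n) (Fin n) ℂ) := by
    rw [← diagonal_smul]
    congr 1
    ext k
    simp
  rw [hU, ← map_smul (conjStarAlgAut ℂ _ U), hdiag, traceNorm_unitary_conj_diagonal,
    Finset.mul_sum]
  congr 1
  ext k
  rw [abs_mul, abs_mul, abs_of_nonneg ht, abs_two]
  ring

lemma sum_abs_cos_pathAngle_pos (hn : 2 ≤ n) : 0 < ∑ k, |Real.cos (pathAngle n k)| := by
  have hk : pathAngle n ⟨0, by omega⟩ < Real.pi / 2 := by
    have : (3 : ℝ) ≤ n + 1 := by exact_mod_cast Nat.succ_le_succ hn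
    rw [pathAngle, div_lt_div_iff₀ (by positivity) two_pos]
    push_cast
    nlinarith [Real.pi_pos]
  refine Finset.sum_pos' (fun k _ => abs_nonneg _) ⟨⟨0, by omega⟩, Finset.mem_univ _, ?_⟩
  have h0 := (pathAngle_mem_Ioo (n := n) ⟨0, by omega⟩).1
  exact abs_pos.mpr (Real.cos_pos_of_mem_Ioo ⟨by linarith, hk⟩).ne'

end PathGraph

/-- For the Schur-product dynamical map `Λ_t(X) = A_t ∘ X` (`t ∈ [0,1/2]`), one
has `‖Λ_t(X₁)‖₁ = 2t Σ |cos(kπ/(n+1))|`, strictly increasing in `t`; hence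
`{Λ_t}` is not P-divisible. -/
theorem schur_dynamical_map_not_pDivisible (n : ℕ) (hn : 2 ≤ n) :
    (∀ t ∈ Set.Icc (0 : ℝ) (1 / 2),
      traceNorm (Matrix.hadamard (schurA n t) (schurX₁ n)) =
        2 * t * ∑ k : Fin n, |Real.cos (((k : ℕ) + 1) * Real.pi / (n + 1))|) ∧
    StrictMonoOn (fun t : ℝ => traceNorm (Matrix.hadamard (schurA n t) (schurX₁ n)))
      (Set.Icc (0 : ℝ) (1 / 2)) ∧
    ¬ (∀ s t : ℝ, 0 ≤ s → s ≤ t → t ≤ 1 / 2 →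
        ∃ Φ : Matrix (Fin n) (Fin n) ℂ →ₗ[ℂ] Matrix (Fin n) (Fin n) ℂ,
          (∀ A : Matrix (Fin n) (Fin n) ℂ, A.PosSemidef → (Φ A).PosSemidef) ∧
          (∀ A : Matrix (Fin n) (Fin n) ℂ, (Φ A).trace = A.trace) ∧
          ∀ X : Matrix (Fin n) (Fin n) ℂ,
            Matrix.hadamard (schurA n t) X = Φ (Matrix.hadamard (schurA n s) X)) := by
  have hnorm : ∀ t ∈ Set.Icc (0 : ℝ) (1 / 2), traceNorm (schurA n t ⊙ schurX₁ n) =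
      2 * t * ∑ k, |Real.cos (pathAngle n k)| := fun t ht => by
    rw [hadamard_schurA_schurX₁, traceNorm_smul_schurX₁ ht.1]
  have hmono : StrictMonoOn (fun t : ℝ => traceNorm (schurA n t ⊙ schurX₁ n))
      (Set.Icc (0 : ℝ) (1 / 2)) := fun a ha b hb hab => by
    have hC := sum_abs_cos_pathAngle_pos hn
    simp only [hnorm a ha, hnorm b hb]
    gcongr
  refine ⟨hnorm, hmono, fun hdiv => ?_⟩
  obtain ⟨Φ, hΦpos, hΦtr, hΦ⟩ := hdiv (1 / 4) (1 / 2) (by norm_num) (by norm_num) le_rfl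
  have hherm : (schurA n (1 / 4) ⊙ schurX₁ n).IsHermitian := by
    rw [hadamard_schurA_schurX₁]
    exact isHermitian_schurX₁.smul (Complex.conj_ofReal _)
  have hle := traceNorm_map_le Φ hΦpos hΦtr hherm
  rw [← hΦ] at hle
  exact hle.not_gt (hmono ⟨by norm_num, by norm_num⟩ ⟨by norm_num, by norm_num⟩ (by norm_num))
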